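/- In the setup of Proposition 8, a nonzero element h ∈ W with h ≥ 0 lies on an extreme ray of the cone W₊ (meaning: 0 ≤ g ≤ h with g ∈ W implies g = λh for some 0 ≤ λ ≤ 1) if and only if h = λ·χ_E for some λ > 0 and some equivalence class E of ∼. -/

import Mathlib

/-!
If `h ≥ 0` spans an extreme ray of the positive cone of a lattice subspace `V ⊆ ℝ^X` with
`1 ∈ V`, then every `0 ≤ g ≤ h` in `V` is a multiple of `h`. Fix `a` with `h a > 0`. If some
`f ∈ V` took different values `f x < f y` at two points of the support of `h`, then
`g = (f - f x)⁺ ⊓ h` would vanish at `x` but not at `y`, which no multiple of `h` does. Hence `f`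
is constant on the support of `h`, so the support lies in the class `E` of `a`, and `h = h a` on `E`
because `h ∈ V`. Conversely, every `0 ≤ g ≤ h = l χ_E` in `V` is constant on `E`, by the
definition of `∼`, and vanishes off `E`.

Since every point has positive mass, `Lp` is a space of genuine functions, so this applies to `W`.
-/

open MeasureTheory Filter Set

section ExtremeRay

variable {E F : Type*} [AddCommGroup E] [PartialOrder E] [Module ℝ E]
  [AddCommGroup F] [PartialOrder F] [Module ℝ F]

def IsExtremeRay (S : Set E) (h : E) : Prop :=
  ∀ g ∈ S, 0 ≤ g → g ≤ h → ∃ l : ℝ, 0 ≤ l ∧ l ≤ 1 ∧ g = l • h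

theorem isExtremeRay_image_iff (L : E →ₗ[ℝ] F) (hL : ∀ f g, L f ≤ L g ↔ f ≤ g) {S : Set E}
    {h : E} : IsExtremeRay (L '' S) (L h) ↔ IsExtremeRay S h := by
  have hinj : Function.Injective L := fun f g hfg =>
    le_antisymm ((hL f g).1 hfg.le) ((hL g f).1 hfg.ge)
  have hnonneg : ∀ g, 0 ≤ L g ↔ 0 ≤ g := fun g => by simpa using hL 0 g
  constructor
  · intro hext g hg hg0 hgh
    obtain ⟨l, hl0, hl1, hgl⟩ :=
      hext (L g) (mem_image_of_mem L hg) ((hnonneg g).2 hg0) ((hL g h).2 hgh)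
    exact ⟨l, hl0, hl1, hinj (by rw [hgl, map_smul])⟩
  · rintro hext _ ⟨g, hg, rfl⟩ hg0 hgh
    obtain ⟨l, hl0, hl1, rfl⟩ := hext g hg ((hnonneg g).1 hg0) ((hL g h).1 hgh)
    exact ⟨l, hl0, hl1, map_smul L l h⟩

end ExtremeRay

section Functions

variable {X : Type*} {V : Submodule ℝ (X → ℝ)} {h : X → ℝ}

theorem IsExtremeRay.apply_le_of_pos (hext : IsExtremeRay V h) (hh : h ∈ V) (h0 : 0 ≤ h)
    (hlat : ∀ f ∈ V, ∀ g ∈ V, f ⊔ g ∈ V ∧ f ⊓ g ∈ V) (hone : 1 ∈ V) {f : X → ℝ} (hf : f ∈ V)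
    {x y : X} (hx : 0 < h x) (hy : 0 < h y) : f y ≤ f x := by
  by_contra! hlt
  have hg : ((f - f x • 1) ⊔ 0) ⊓ h ∈ V :=
    (hlat _ (hlat _ (V.sub_mem hf (V.smul_mem _ hone)) _ V.zero_mem).1 _ hh).2
  obtain ⟨l, -, -, hgl⟩ := hext _ hg (le_inf le_sup_right h0) inf_le_right
  have hgx : 0 = l * h x := by simpa [min_eq_left hx.le] using congr_fun hgl x
  have hgy : min (max (f y - f x) 0) (h y) = l * h y := by simpa using congr_fun hgl y
  have hl : l = 0 := by simpa [hx.ne'] using hgx.symm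
  have hgy_pos : 0 < min (max (f y - f x) 0) (h y) :=
    lt_min (lt_max_of_lt_left (sub_pos.2 hlt)) hy
  rw [hgy, hl, zero_mul] at hgy_pos
  exact lt_irrefl 0 hgy_pos

theorem IsExtremeRay.exists_eq_indicator (hext : IsExtremeRay V h) (hh : h ∈ V) (h0 : 0 ≤ h)
    (hne : h ≠ 0) (hlat : ∀ f ∈ V, ∀ g ∈ V, f ⊔ g ∈ V ∧ f ⊓ g ∈ V) (hone : 1 ∈ V) :
    ∃ l : ℝ, 0 < l ∧ ∃ a : X, h = {x | ∀ f ∈ V, f x = f a}.indicator fun _ => l := by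
  obtain ⟨a, ha⟩ := Function.ne_iff.1 hne
  have ha : 0 < h a := (h0 a).lt_of_ne' ha
  refine ⟨h a, ha, a, funext fun z => ?_⟩
  by_cases hz : z ∈ {x | ∀ f ∈ V, f x = f a}
  · rw [indicator_of_mem hz]
    exact hz h hh
  · rw [indicator_of_notMem hz]
    refine ((h0 z).eq_or_lt.resolve_right fun hz_pos => hz fun f hf => ?_).symm
    exact le_antisymm (hext.apply_le_of_pos hh h0 hlat hone hf ha hz_pos)
      (hext.apply_le_of_pos hh h0 hlat hone hf hz_pos ha)

theorem isExtremeRay_indicator (S : Set (X → ℝ)) {l : ℝ} (hl : 0 < l) (a : X) :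
    IsExtremeRay S ({x | ∀ f ∈ S, f x = f a}.indicator fun _ => l) := by
  intro g hg hg0 hgh
  have ha : a ∈ {x | ∀ f ∈ S, f x = f a} := fun _ _ => rfl
  refine ⟨g a / l, div_nonneg (hg0 a) hl.le, (div_le_one hl).2 ?_, funext fun z => ?_⟩
  · simpa [indicator_of_mem ha] using hgh a
  by_cases hz : z ∈ {x | ∀ f ∈ S, f x = f a}
  · simp [indicator_of_mem hz, hz g hg, hl.ne']
  · have hgz : g z ≤ 0 := by simpa [indicator_of_notMem hz] using hgh z
    simp [indicator_of_notMem hz, le_antisymm hgz (hg0 z)]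

theorem isExtremeRay_iff_exists_eq_indicator (hh : h ∈ V) (h0 : 0 ≤ h) (hne : h ≠ 0)
    (hlat : ∀ f ∈ V, ∀ g ∈ V, f ⊔ g ∈ V ∧ f ⊓ g ∈ V) (hone : 1 ∈ V) :
    IsExtremeRay V h ↔
      ∃ l : ℝ, 0 < l ∧ ∃ a : X, h = {x | ∀ f ∈ V, f x = f a}.indicator fun _ => l :=
  ⟨fun hext => hext.exists_eq_indicator hh h0 hne hlat hone,
    by rintro ⟨l, hl, a, rfl⟩; exact isExtremeRay_indicator V hl a⟩

end Functions

namespace MeasureTheory.Lp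

variable {X : Type*} [MeasurableSpace X] {μ : Measure X} {p : ENNReal}

noncomputable def toFunₗ (hμ : ae μ = ⊤) : Lp ℝ p μ →ₗ[ℝ] X → ℝ where
  toFun f := f
  map_add' f g := eventuallyEq_top.1 (hμ ▸ coeFn_add f g)
  map_smul' c f := eventuallyEq_top.1 (hμ ▸ coeFn_smul c f)

@[simp]
theorem toFunₗ_apply (hμ : ae μ = ⊤) (f : Lp ℝ p μ) : toFunₗ hμ f = f :=
  rfl

theorem toFunₗ_injective (hμ : ae μ = ⊤) : Function.Injective (toFunₗ (p := p) hμ) :=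
  fun _ _ hfg => Lp.ext (hμ ▸ eventuallyEq_top.2 hfg)

theorem toFunₗ_le_iff (hμ : ae μ = ⊤) (f g : Lp ℝ p μ) :
    toFunₗ hμ f ≤ toFunₗ hμ g ↔ f ≤ g := by
  rw [← coeFn_le, hμ]
  exact eventually_top.symm

theorem map_toFunₗ_sup_inf_mem (hμ : ae μ = ⊤) {W : Submodule ℝ (Lp ℝ p μ)}
    (hlat : ∀ f ∈ W, ∀ g ∈ W, f ⊔ g ∈ W ∧ f ⊓ g ∈ W) :
    ∀ f ∈ W.map (toFunₗ hμ), ∀ g ∈ W.map (toFunₗ hμ),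
      f ⊔ g ∈ W.map (toFunₗ hμ) ∧ f ⊓ g ∈ W.map (toFunₗ hμ) := by
  rintro _ ⟨f, hf, rfl⟩ _ ⟨g, hg, rfl⟩
  exact ⟨⟨f ⊔ g, (hlat f hf g hg).1, eventuallyEq_top.1 (hμ ▸ coeFn_sup f g)⟩,
    ⟨f ⊓ g, (hlat f hf g hg).2, eventuallyEq_top.1 (hμ ▸ coeFn_inf f g)⟩⟩

end MeasureTheory.Lp

theorem extreme_ray_iff_indicator
    {X : Type*} [MeasurableSpace X]
    (w : X → ℝ) (hw : ∀ x, 0 < w x)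
    (μ : Measure X) (hμ : ∀ x, μ {x} = ENNReal.ofReal (w x))
    (p : ENNReal)
    (W : Submodule ℝ (Lp ℝ p μ))
    (hlat : ∀ f ∈ W, ∀ g ∈ W, f ⊔ g ∈ W ∧ f ⊓ g ∈ W)
    (one : Lp ℝ p μ) (hone : ∀ᵐ x ∂μ, one x = 1) (hone' : one ∈ W)
    (h : Lp ℝ p μ) (hh : h ∈ W) (hh0 : 0 ≤ h) (hhne : h ≠ 0) :
    (∀ g ∈ W, 0 ≤ g → g ≤ h → ∃ l : ℝ, 0 ≤ l ∧ l ≤ 1 ∧ g = l • h) ↔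
      ∃ l : ℝ, 0 < l ∧ ∃ a : X,
        ⇑h =ᵐ[μ] Set.indicator {x | ∀ f ∈ W, f x = f a} (fun _ => l) := by
  have hμ' : ae μ = ⊤ := ae_eq_top.2 fun x => by simpa [hμ] using hw x
  set L := Lp.toFunₗ (p := p) hμ'
  have hLh0 : 0 ≤ L h := by simpa only [map_zero] using (Lp.toFunₗ_le_iff hμ' 0 h).2 hh0
  have hone_mem : 1 ∈ W.map L := ⟨one, hone', funext (eventually_top.1 (hμ' ▸ hone))⟩
  have hclass : ∀ a, {x | ∀ f ∈ W.map L, f x = f a} = {x | ∀ f ∈ W, f x = f a} := by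
    intro a
    ext x
    simp only [mem_ofPred_eq, Submodule.mem_map, forall_exists_index, and_imp,
      forall_apply_eq_imp_iff₂, L, Lp.toFunₗ_apply]
  have key := (isExtremeRay_image_iff L (Lp.toFunₗ_le_iff hμ') (S := W) (h := h)).symm.trans
    (isExtremeRay_iff_exists_eq_indicator (Submodule.mem_map_of_mem hh) hLh0
      ((map_ne_zero_iff L (Lp.toFunₗ_injective hμ')).2 hhne)
      (Lp.map_toFunₗ_sup_inf_mem hμ' hlat) hone_mem)
  simp_rw [hμ', eventuallyEq_top, ← hclass]
  exact key
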